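/- arXiv:2101.01963 — 3 statements merged into one kernel-verified Lean document; each statement's English description precedes it below -/
import Mathlib

section
/- Let τ > 0, α ∈ (0,1), and define δ_τ(ζ) = (1 − ζ)/τ. There exist positive constants C_0 and C_1 depending only on θ (not on τ) such that for every complex z with |arg z| = θ ∈ (π/2, π) and |z| ≤ π/(τ sin θ), one has C_0 |z| ≤ |δ_τ(e^{−zτ})| ≤ C_1 |z|. -/
open Complex Real

/-! With `u = -zτ` the symbol is `(1 - eᵘ)/τ`, and `|arg z| = θ` gives `Re u = -cos θ · |z|τ ≥ 0`.
The lower bound is `|eᵘ - 1| ≥ e^{Re u} - 1 ≥ Re u`; the upper bound is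
`|eᵘ - 1| ≤ |u| e^{|u|}`, where `|u| = |z|τ ≤ π / sin θ`. -/

namespace Complex

theorem re_le_norm_exp_sub_one (u : ℂ) : u.re ≤ ‖exp u - 1‖ :=
  calc u.re ≤ Real.exp u.re - 1 := by linarith [Real.add_one_le_exp u.re]
    _ = ‖exp u‖ - ‖(1 : ℂ)‖ := by rw [norm_exp, norm_one]
    _ ≤ ‖exp u - 1‖ := norm_sub_norm_le _ _

theorem norm_exp_sub_one_le_exp_mul_norm {u : ℂ} {R : ℝ} (hu : ‖u‖ ≤ R) :
    ‖exp u - 1‖ ≤ Real.exp R * ‖u‖ := by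
  have h := norm_exp_sub_sum_le_norm_mul_exp u 1
  simp only [Finset.range_one, Finset.sum_singleton, pow_zero, Nat.factorial_zero, Nat.cast_one,
    div_one, pow_one] at h
  calc ‖exp u - 1‖ ≤ ‖u‖ * Real.exp ‖u‖ := h
    _ ≤ ‖u‖ * Real.exp R := by gcongr
    _ = Real.exp R * ‖u‖ := mul_comm _ _

theorem re_eq_cos_mul_norm_of_abs_arg_eq {z : ℂ} {θ : ℝ} (h : |z.arg| = θ) :
    z.re = Real.cos θ * ‖z‖ := by
  rw [← h, Real.cos_abs, ← norm_mul_cos_arg, mul_comm]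

end Complex

/-- Two-sided bound for the backward Euler symbol: there exist `C₀, C₁ > 0`
depending only on `θ` such that `C₀|z| ≤ |(1 − e^{−zτ})/τ| ≤ C₁|z|` for all
`τ > 0` and `z` with `|arg z| = θ` and `|z| ≤ π/(τ sin θ)`. -/
theorem backward_euler_symbol_bounds (θ : ℝ) (hθ₁ : Real.pi / 2 < θ) (hθ₂ : θ < Real.pi) :
    ∃ C₀ C₁ : ℝ, 0 < C₀ ∧ 0 < C₁ ∧
      ∀ (τ : ℝ), 0 < τ → ∀ z : ℂ, z ≠ 0 → |z.arg| = θ →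
        ‖z‖ ≤ Real.pi / (τ * Real.sin θ) →
        C₀ * ‖z‖ ≤ ‖(1 - Complex.exp (-z * τ)) / τ‖ ∧
        ‖(1 - Complex.exp (-z * τ)) / τ‖ ≤ C₁ * ‖z‖ := by
  have hcos : Real.cos θ < 0 := cos_neg_of_pi_div_two_lt_of_lt hθ₁ (by linarith [pi_pos])
  refine ⟨-Real.cos θ, Real.exp (π / Real.sin θ), by linarith, Real.exp_pos _, ?_⟩
  intro τ hτ z _ harg hz
  have hnorm_u : ‖-z * τ‖ = ‖z‖ * τ := by
    rw [norm_mul, norm_neg, Complex.norm_of_nonneg hτ.le]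
  have hre_u : (-z * τ).re = -Real.cos θ * ‖z‖ * τ := by
    simp only [neg_mul, neg_re, re_mul_ofReal, re_eq_cos_mul_norm_of_abs_arg_eq harg]
  have hsymbol : ‖(1 - exp (-z * τ)) / τ‖ = ‖exp (-z * τ) - 1‖ / τ := by
    rw [norm_div, norm_sub_rev, Complex.norm_of_nonneg hτ.le]
  have hnorm_le : ‖-z * τ‖ ≤ π / Real.sin θ := by
    rwa [hnorm_u, ← le_div_iff₀ hτ, div_div, mul_comm (Real.sin θ)]
  rw [hsymbol, le_div_iff₀ hτ, div_le_iff₀ hτ]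
  constructor
  · linarith [re_le_norm_exp_sub_one (-z * τ)]
  · calc ‖exp (-z * τ) - 1‖ ≤ Real.exp (π / Real.sin θ) * ‖-z * τ‖ :=
          norm_exp_sub_one_le_exp_mul_norm hnorm_le
      _ = Real.exp (π / Real.sin θ) * ‖z‖ * τ := by rw [hnorm_u, mul_assoc]
end

section
/- Let α ∈ (0,1), τ > 0, θ ∈ (π/2, π). There exists C depending only on θ and α such that for all z with |arg z| = θ, |z| ≤ π/(τ sin θ), one has |((1 − e^{−zτ})/τ)^α − z^α| ≤ C τ |z|^{α+1}. -/
open Complex Real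

/-!
Write `δ = (1 - e^{-zτ}) / τ`. Taylor's theorem gives `|δ - z| ≤ τ |z|² e^{τ |z|}`, and
`|e^{-zτ}| = e^{-τ Re z} ≥ 1 - τ Re z` gives `|δ| ≥ -Re z = -cos θ |z|`. As `τ |z| ≤ R := π / sin θ`,
`δ` lies in the annulus `-cos θ |z| ≤ |δ| ≤ K |z|` with `K = 1 + R e^R`, and `τ |Im z| ≤ π` keeps it
off the negative real axis and in the same closed half-plane as `z`, so `|arg δ - arg z| < π`.
On such pairs `log` is Lipschitz with constant `(1 + π / 2) / (-cos θ |z|)` (for the argument,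
Jordan's inequality bounds the arc by the chord), and `w ↦ e^{α w}` is Lipschitz with constant
`α (K |z|)^α` on `Re w ≤ log (K |z|)`; composing the two gives `|δ^α - z^α| ≲ (K |z|)^α τ |z|`.
-/

lemma Real.abs_log_sub_log_le {a b m : ℝ} (hm : 0 < m) (ha : m ≤ a) (hb : m ≤ b) :
    |Real.log a - Real.log b| ≤ |a - b| / m := by
  have key : ∀ x y, m ≤ x → m ≤ y → Real.log x - Real.log y ≤ |x - y| / m := by
    intro x y hx hy
    have hy0 : 0 < y := hm.trans_le hy
    have hx0 : 0 < x := hm.trans_le hx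
    calc Real.log x - Real.log y = Real.log (x / y) := (Real.log_div hx0.ne' hy0.ne').symm
      _ ≤ x / y - 1 := Real.log_le_sub_one_of_pos (by positivity)
      _ = (x - y) / y := by field_simp
      _ ≤ |x - y| / y := by gcongr; exact le_abs_self _
      _ ≤ |x - y| / m := by gcongr
  rw [abs_sub_le_iff]
  exact ⟨key a b ha hb, abs_sub_comm a b ▸ key b a hb ha⟩

lemma Real.mul_sin_nonneg {x : ℝ} (hx : |x| ≤ π) : 0 ≤ x * Real.sin x := by
  rcases le_total 0 x with h | h
  · exact mul_nonneg h (Real.sin_nonneg_of_nonneg_of_le_pi h (by linarith [le_abs_self x]))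
  · exact mul_nonneg_of_nonpos_of_nonpos h
      (Real.sin_nonpos_of_nonpos_of_neg_pi_le h (by linarith [neg_abs_le x]))

namespace Complex

variable {a b : ℂ} {m : ℝ}

lemma norm_exp_sub_exp_le (ha : a.re ≤ m) (hb : b.re ≤ m) :
    ‖exp a - exp b‖ ≤ Real.exp m * ‖a - b‖ := by
  simpa using Convex.norm_image_sub_le_of_norm_hasDerivWithin_le
    (fun x _ => (hasDerivAt_exp x).hasDerivWithinAt)
    (fun x (hx : x.re ≤ m) => by rw [norm_exp]; exact Real.exp_le_exp.2 hx)
    (convex_halfSpace_re_le m) hb ha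

lemma norm_sub_sq_eq_sq_sub_add_sin_sq (a b : ℂ) :
    ‖a - b‖ ^ 2 = (‖a‖ - ‖b‖) ^ 2 + 4 * ‖a‖ * ‖b‖ * Real.sin ((arg a - arg b) / 2) ^ 2 := by
  have hre : (a * (starRingEnd ℂ) b).re = ‖a‖ * ‖b‖ * Real.cos (arg a - arg b) := by
    rw [Real.cos_sub, mul_re, conj_re, conj_im, ← norm_mul_cos_arg a, ← norm_mul_sin_arg a,
      ← norm_mul_cos_arg b, ← norm_mul_sin_arg b]
    ring
  rw [Complex.sq_norm, normSq_sub, normSq_eq_norm_sq, normSq_eq_norm_sq, hre,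
    Real.sin_sq_eq_half_sub, mul_div_cancel₀]
  · ring
  · norm_num

lemma abs_arg_sub_arg_le (hm : 0 < m) (ha : m ≤ ‖a‖) (hb : m ≤ ‖b‖)
    (hab : |arg a - arg b| ≤ π) : |arg a - arg b| ≤ π / (2 * m) * ‖a - b‖ := by
  set φ := arg a - arg b
  have hjordan : |φ| / π ≤ |Real.sin (φ / 2)| := by
    have := mul_abs_le_abs_sin (x := φ / 2) (by rw [abs_div]; linarith)
    rw [abs_div, abs_two] at this
    convert this using 1
    field_simp
  have hchord : (2 * m * |Real.sin (φ / 2)|) ^ 2 ≤ ‖a - b‖ ^ 2 := by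
    rw [norm_sub_sq_eq_sq_sub_add_sin_sq, mul_pow, sq_abs]
    have : m ^ 2 ≤ ‖a‖ * ‖b‖ := by nlinarith
    nlinarith [sq_nonneg (‖a‖ - ‖b‖), sq_nonneg (Real.sin (φ / 2))]
  have hchord' : 2 * m * |Real.sin (φ / 2)| ≤ ‖a - b‖ :=
    (abs_le_of_sq_le_sq hchord (norm_nonneg _)).trans' (le_abs_self _)
  rw [div_mul_eq_mul_div, le_div_iff₀ (by positivity)]
  have hπ := pi_pos
  calc |φ| * (2 * m) = 2 * m * (|φ| / π) * π := by field_simp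
    _ ≤ 2 * m * |Real.sin (φ / 2)| * π := by gcongr
    _ ≤ ‖a - b‖ * π := by gcongr
    _ = π * ‖a - b‖ := mul_comm _ _

lemma norm_log_sub_log_le (hm : 0 < m) (ha : m ≤ ‖a‖) (hb : m ≤ ‖b‖)
    (hab : |arg a - arg b| ≤ π) : ‖log a - log b‖ ≤ (1 + π / 2) / m * ‖a - b‖ := by
  have hsplit : log a - log b =
      ((Real.log ‖a‖ - Real.log ‖b‖ : ℝ) : ℂ) + ((arg a - arg b : ℝ) : ℂ) * I := by
    simp only [log, ofReal_sub]
    ring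
  calc ‖log a - log b‖ ≤ |Real.log ‖a‖ - Real.log ‖b‖| + |arg a - arg b| := by
        rw [hsplit]
        refine (norm_add_le _ _).trans_eq ?_
        rw [norm_mul, norm_I, mul_one, norm_real, norm_real, Real.norm_eq_abs, Real.norm_eq_abs]
    _ ≤ |‖a‖ - ‖b‖| / m + π / (2 * m) * ‖a - b‖ :=
        add_le_add (Real.abs_log_sub_log_le hm ha hb) (abs_arg_sub_arg_le hm ha hb hab)
    _ ≤ ‖a - b‖ / m + π / (2 * m) * ‖a - b‖ := by gcongr; exact abs_norm_sub_norm_le a b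
    _ = (1 + π / 2) / m * ‖a - b‖ := by field_simp

lemma norm_cpow_sub_cpow_le {α M : ℝ} (hα : 0 ≤ α) (hm : 0 < m)
    (ha : m ≤ ‖a‖) (hb : m ≤ ‖b‖) (haM : ‖a‖ ≤ M) (hbM : ‖b‖ ≤ M) (hab : |arg a - arg b| ≤ π) :
    ‖a ^ (α : ℂ) - b ^ (α : ℂ)‖ ≤ M ^ α * α * ((1 + π / 2) / m * ‖a - b‖) := by
  have hre : ∀ w : ℂ, m ≤ ‖w‖ → ‖w‖ ≤ M → (log w * α).re ≤ Real.log M * α := fun w hw hwM => by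
    rw [re_mul_ofReal, log_re]
    exact mul_le_mul_of_nonneg_right (Real.log_le_log (hm.trans_le hw) hwM) hα
  have hM : 0 < M := hm.trans_le (ha.trans haM)
  rw [cpow_def_of_ne_zero (norm_pos_iff.1 (hm.trans_le ha)),
    cpow_def_of_ne_zero (norm_pos_iff.1 (hm.trans_le hb))]
  calc ‖exp (log a * α) - exp (log b * α)‖
      ≤ Real.exp (Real.log M * α) * ‖log a * α - log b * α‖ :=
        norm_exp_sub_exp_le (hre a ha haM) (hre b hb hbM)
    _ = M ^ α * α * ‖log a - log b‖ := by
        rw [← sub_mul, norm_mul, norm_real, Real.norm_of_nonneg hα, Real.rpow_def_of_pos hM]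
        ring
    _ ≤ M ^ α * α * ((1 + π / 2) / m * ‖a - b‖) := by
        gcongr
        exact norm_log_sub_log_le hm ha hb hab

lemma re_eq_norm_mul_cos_abs_arg (z : ℂ) : z.re = ‖z‖ * Real.cos |arg z| := by
  rw [Real.cos_abs, norm_mul_cos_arg]

lemma abs_im_eq_norm_mul_sin_abs_arg (z : ℂ) : |z.im| = ‖z‖ * Real.sin |arg z| := by
  rw [← abs_sin_eq_sin_abs_of_abs_le_pi (abs_arg_le_pi z), ← norm_mul_sin_arg, abs_mul, abs_norm]

lemma arg_nonpos_of_im_nonpos {w : ℂ} (hw : w ∈ slitPlane) (him : w.im ≤ 0) : arg w ≤ 0 := by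
  rcases him.lt_or_eq with h | h
  · exact (arg_neg_iff.2 h).le
  · exact (arg_eq_zero_iff.2 ⟨((mem_slitPlane_iff.1 hw).resolve_right (not_not.2 h)).le, h⟩).le

lemma abs_arg_sub_arg_lt_pi (ha : a ∈ slitPlane) (hb : b ∈ slitPlane)
    (hab : 0 ≤ a.im * b.im) : |arg a - arg b| < π := by
  have ha₁ := neg_pi_lt_arg a
  have hb₁ := neg_pi_lt_arg b
  have ha₂ := (arg_le_pi a).lt_of_ne (slitPlane_arg_ne_pi ha)
  have hb₂ := (arg_le_pi b).lt_of_ne (slitPlane_arg_ne_pi hb)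
  rw [abs_sub_lt_iff]
  rcases mul_nonneg_iff.1 hab with ⟨ha', hb'⟩ | ⟨ha', hb'⟩
  · have := arg_nonneg_iff.2 ha'
    have := arg_nonneg_iff.2 hb'
    constructor <;> linarith
  · have := arg_nonpos_of_im_nonpos ha ha'
    have := arg_nonpos_of_im_nonpos hb hb'
    constructor <;> linarith

end Complex

/-- The symbol `δ_τ(e^{-zτ})` of the backward Euler scheme, where `δ_τ(ζ) = (1 - ζ) / τ`. -/
noncomputable def backwardEulerSymbol (τ : ℝ) (z : ℂ) : ℂ :=
  (1 - exp (-z * τ)) / τ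

section backwardEulerSymbol

variable {τ : ℝ} {z : ℂ}

lemma norm_backwardEulerSymbol_sub_le (hτ : 0 < τ) (z : ℂ) :
    ‖backwardEulerSymbol τ z - z‖ ≤ τ * ‖z‖ ^ 2 * Real.exp (τ * ‖z‖) := by
  have hu : ‖-z * τ‖ = τ * ‖z‖ := by
    rw [norm_mul, norm_neg, norm_real, Real.norm_of_nonneg hτ.le, mul_comm]
  have htaylor := norm_exp_sub_sum_le_norm_mul_exp (-z * τ) 2
  simp only [Finset.sum_range_succ, Finset.sum_range_zero, zero_add, pow_zero, pow_one,
    Nat.factorial_zero, Nat.factorial_one, Nat.cast_one, div_one, hu] at htaylor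
  have hid : backwardEulerSymbol τ z - z = -(exp (-z * τ) - (1 + -z * τ)) / τ := by
    rw [backwardEulerSymbol]
    field_simp [ofReal_ne_zero.2 hτ.ne']
    ring
  rw [hid, norm_div, norm_neg, norm_real, Real.norm_of_nonneg hτ.le, div_le_iff₀ hτ]
  linarith

lemma norm_backwardEulerSymbol_le (hτ : 0 < τ) (z : ℂ) :
    ‖backwardEulerSymbol τ z‖ ≤ (1 + τ * ‖z‖ * Real.exp (τ * ‖z‖)) * ‖z‖ := calc
  ‖backwardEulerSymbol τ z‖ ≤ ‖z‖ + ‖backwardEulerSymbol τ z - z‖ :=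
    norm_le_norm_add_norm_sub' _ z
  _ ≤ ‖z‖ + τ * ‖z‖ ^ 2 * Real.exp (τ * ‖z‖) := by
    gcongr
    exact norm_backwardEulerSymbol_sub_le hτ z
  _ = (1 + τ * ‖z‖ * Real.exp (τ * ‖z‖)) * ‖z‖ := by ring

lemma neg_re_le_norm_backwardEulerSymbol (hτ : 0 < τ) (z : ℂ) :
    -z.re ≤ ‖backwardEulerSymbol τ z‖ := by
  have hnorm : ‖backwardEulerSymbol τ z‖ = ‖exp (-z * τ) - 1‖ / τ := by
    rw [backwardEulerSymbol, norm_div, norm_real, Real.norm_of_nonneg hτ.le, norm_sub_rev]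
  have hexp : ‖exp (-z * τ)‖ = Real.exp (-(z.re * τ)) := by
    simp [norm_exp]
  rw [hnorm, le_div_iff₀ hτ]
  calc -z.re * τ ≤ Real.exp (-(z.re * τ)) - 1 := by
        linarith [Real.add_one_le_exp (-(z.re * τ))]
    _ = ‖exp (-z * τ)‖ - ‖(1 : ℂ)‖ := by rw [hexp, norm_one]
    _ ≤ ‖exp (-z * τ) - 1‖ := norm_sub_norm_le _ _

lemma backwardEulerSymbol_re (z : ℂ) :
    (backwardEulerSymbol τ z).re = (1 - Real.exp (-(z.re * τ)) * Real.cos (z.im * τ)) / τ := by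
  simp [backwardEulerSymbol, exp_re]

lemma backwardEulerSymbol_im (z : ℂ) :
    (backwardEulerSymbol τ z).im = Real.exp (-(z.re * τ)) * Real.sin (z.im * τ) / τ := by
  simp [backwardEulerSymbol, exp_im]

lemma backwardEulerSymbol_mem_slitPlane (hτ : 0 < τ) (h0 : z.im ≠ 0) (hπ : |z.im| * τ ≤ π) :
    backwardEulerSymbol τ z ∈ slitPlane := by
  have hπ' : |z.im * τ| ≤ π := by rwa [abs_mul, abs_of_pos hτ]
  rw [mem_slitPlane_iff, backwardEulerSymbol_re, backwardEulerSymbol_im]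
  by_cases hsin : Real.sin (z.im * τ) = 0
  · -- `sin (z.im * τ) = 0` forces `z.im * τ = ± π`, where the real part is positive.
    have hcos : Real.cos (z.im * τ) = -1 := by
      refine (Real.sin_eq_zero_iff_cos_eq.1 hsin).resolve_left fun h => h0 ?_
      have := (Real.cos_eq_one_iff_of_lt_of_lt (by linarith [neg_abs_le (z.im * τ), pi_pos])
        (by linarith [le_abs_self (z.im * τ), pi_pos])).1 h
      simpa [hτ.ne'] using this
    left
    rw [hcos]
    exact div_pos (by linarith [Real.exp_pos (-(z.re * τ))]) hτ
  · exact Or.inr (div_ne_zero (mul_ne_zero (Real.exp_pos _).ne' hsin) hτ.ne')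

lemma im_mul_backwardEulerSymbol_im_nonneg (hτ : 0 < τ) (hπ : |z.im| * τ ≤ π) :
    0 ≤ (backwardEulerSymbol τ z).im * z.im := by
  have hsin := Real.mul_sin_nonneg (x := z.im * τ) (by rwa [abs_mul, abs_of_pos hτ])
  rw [backwardEulerSymbol_im]
  have : Real.exp (-(z.re * τ)) * Real.sin (z.im * τ) / τ * z.im
      = Real.exp (-(z.re * τ)) / τ ^ 2 * (z.im * τ * Real.sin (z.im * τ)) := by
    field_simp
  rw [this]
  exact mul_nonneg (by positivity) hsin

lemma abs_arg_backwardEulerSymbol_sub_arg_lt_pi (hτ : 0 < τ) (h0 : z.im ≠ 0)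
    (hπ : |z.im| * τ ≤ π) : |arg (backwardEulerSymbol τ z) - arg z| < π :=
  abs_arg_sub_arg_lt_pi (backwardEulerSymbol_mem_slitPlane hτ h0 hπ)
    (mem_slitPlane_iff.2 (Or.inr h0)) (im_mul_backwardEulerSymbol_im_nonneg hτ hπ)

end backwardEulerSymbol

theorem backward_euler_symbol_pow_consistency_general (θ α : ℝ)
    (hθ₁ : Real.pi / 2 < θ) (hθ₂ : θ < Real.pi) (hα₀ : 0 < α) :
    ∃ C : ℝ, 0 < C ∧
      ∀ (τ : ℝ), 0 < τ → ∀ z : ℂ, z ≠ 0 → |z.arg| = θ →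
        ‖z‖ ≤ Real.pi / (τ * Real.sin θ) →
        ‖((1 - Complex.exp (-z * τ)) / τ) ^ (α : ℂ) - z ^ (α : ℂ)‖
          ≤ C * τ * ‖z‖ ^ (α + 1) := by
  have hsin : 0 < Real.sin θ := Real.sin_pos_of_pos_of_lt_pi (by linarith [pi_pos]) hθ₂
  have hcos : 0 < -Real.cos θ := neg_pos.2 (Real.cos_neg_of_pi_div_two_lt_of_lt hθ₁ (by linarith))
  set R := π / Real.sin θ
  set K := 1 + R * Real.exp R
  have hK : 1 ≤ K := le_add_of_nonneg_right (by positivity)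
  refine ⟨α * (1 + π / 2) * Real.exp R * K ^ α / -Real.cos θ, by positivity,
    fun τ hτ z hz harg hle => ?_⟩
  change ‖backwardEulerSymbol τ z ^ (α : ℂ) - z ^ (α : ℂ)‖ ≤ _
  set δ := backwardEulerSymbol τ z
  set r := ‖z‖
  have hr : 0 < r := norm_pos_iff.2 hz
  have him : |z.im| = r * Real.sin θ := harg ▸ abs_im_eq_norm_mul_sin_abs_arg z
  rw [le_div_iff₀ (by positivity)] at hle
  have hτr : τ * r ≤ R := by rw [le_div_iff₀ hsin]; linarith
  have hdist : ‖δ - z‖ ≤ τ * r ^ 2 * Real.exp R :=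
    (norm_backwardEulerSymbol_sub_le hτ z).trans (by gcongr)
  have hlow : -Real.cos θ * r ≤ ‖δ‖ := by
    linarith [neg_re_le_norm_backwardEulerSymbol hτ z, harg ▸ re_eq_norm_mul_cos_abs_arg z]
  have hup : ‖δ‖ ≤ K * r := (norm_backwardEulerSymbol_le hτ z).trans <| by
    gcongr
    show _ ≤ 1 + R * Real.exp R
    gcongr
  have hargs : |arg δ - arg z| ≤ π := (abs_arg_backwardEulerSymbol_sub_arg_lt_pi hτ
    (abs_pos.1 (him ▸ by positivity)) (by rw [him]; linarith)).le
  calc _ ≤ (K * r) ^ α * α * ((1 + π / 2) / (-Real.cos θ * r) * ‖δ - z‖) :=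
        norm_cpow_sub_cpow_le hα₀.le (by positivity) hlow (by nlinarith [Real.neg_one_le_cos θ])
          hup (by nlinarith) hargs
    _ ≤ (K * r) ^ α * α * ((1 + π / 2) / (-Real.cos θ * r) * (τ * r ^ 2 * Real.exp R)) := by
        gcongr
    _ = α * (1 + π / 2) * Real.exp R * K ^ α / -Real.cos θ * τ * r ^ (α + 1) := by
        rw [Real.mul_rpow (by positivity) hr.le, Real.rpow_add_one hr.ne']
        field_simp

/-- Consistency of the fractional power of the backward Euler symbol: there
exists `C` depending only on `θ` and `α` with
`|((1 − e^{−zτ})/τ)^α − z^α| ≤ C τ |z|^{α+1}` for all `τ > 0` and `z` with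
`|arg z| = θ` and `|z| ≤ π/(τ sin θ)`. -/
theorem backward_euler_symbol_pow_consistency (θ α : ℝ)
    (hθ₁ : Real.pi / 2 < θ) (hθ₂ : θ < Real.pi) (hα₀ : 0 < α) (hα₁ : α < 1) :
    ∃ C : ℝ, 0 < C ∧
      ∀ (τ : ℝ), 0 < τ → ∀ z : ℂ, z ≠ 0 → |z.arg| = θ →
        ‖z‖ ≤ Real.pi / (τ * Real.sin θ) →
        ‖((1 - Complex.exp (-z * τ)) / τ) ^ (α : ℂ) - z ^ (α : ℂ)‖
          ≤ C * τ * ‖z‖ ^ (α + 1) :=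
  backward_euler_symbol_pow_consistency_general θ α hθ₁ hθ₂ hα₀
end

section
/- Let H be a real Hilbert space, V ⊆ H a dense subspace which is a Hilbert space with inner product ⟨·,·⟩_V continuously embedded in H, and let z be a complex number in the sector Σ_θ = {z ≠ 0 : |arg z| ≤ θ} with θ ∈ (π/2, π) and α ∈ (0,1). Suppose u ∈ V solves z^α(u, χ)_H + ⟨u, χ⟩_V = f(χ) for all χ ∈ V, where f ∈ V*. Then ‖u‖_V ≤ C‖f‖_{V*} and |z|^{α/2} ‖u‖_H ≤ C ‖f‖_{V*}, where C depends only on θ and α. -/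
open Complex Real

/-! Testing `χ = u` gives the energy identity `z^α ‖u‖_H² + ‖u‖_V² = f(u)`. Since `z^α` lies in
the sector `|arg| ≤ αθ` with `αθ < π`, no cancellation can occur between the two terms:
`|w a + b| ≥ c (|w| a + b)` for `a, b ≥ 0`, with `c² = (1 + cos αθ)/2 > 0`. Hence
`c (|z|^α ‖u‖_H² + ‖u‖_V²) ≤ ‖f‖ ‖u‖_V`, and both estimates follow with `C = 1/c`. -/

lemma half_one_add_mul_sq_le_sq_norm_mul_add {w : ℂ} {k a b : ℝ} (hk : k ≤ 1)
    (hw : ‖w‖ * k ≤ w.re) (ha : 0 ≤ a) (hb : 0 ≤ b) :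
    (1 + k) / 2 * (‖w‖ * a + b) ^ 2 ≤ ‖w * a + b‖ ^ 2 := by
  have hnorm : ‖w * a + b‖ ^ 2 = ‖w‖ ^ 2 * a ^ 2 + 2 * (a * b) * w.re + b ^ 2 := by
    simp only [Complex.sq_norm, normSq_apply, add_re, add_im, mul_re, mul_im, ofReal_re,
      ofReal_im]
    ring
  rw [hnorm]
  -- the gap is `(1 - k)/2 (‖w‖ a - b)²` plus `2ab (re w - k ‖w‖)`
  nlinarith [sq_nonneg (‖w‖ * a - b), mul_le_mul_of_nonneg_left hw (mul_nonneg ha hb)]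

lemma sqrt_half_one_add_mul_le_norm_mul_add {w : ℂ} {k a b : ℝ} (hk : k ≤ 1)
    (hw : ‖w‖ * k ≤ w.re) (ha : 0 ≤ a) (hb : 0 ≤ b) :
    √((1 + k) / 2) * (‖w‖ * a + b) ≤ ‖w * a + b‖ := by
  have hsq := sqrt_le_sqrt (half_one_add_mul_sq_le_sq_norm_mul_add hk hw ha hb)
  rwa [sqrt_mul' _ (sq_nonneg _), sqrt_sq (by positivity), sqrt_sq (norm_nonneg _)] at hsq

lemma norm_rpow_mul_cos_le_re_cpow {z : ℂ} {α θ : ℝ} (hα : 0 ≤ α) (hz : |z.arg| ≤ θ)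
    (hαθ : α * θ ≤ π) :
    ‖z‖ ^ α * Real.cos (α * θ) ≤ (z ^ (α : ℂ)).re := by
  rw [cpow_ofReal_re, ← cos_abs (z.arg * α), abs_mul, abs_of_nonneg hα]
  gcongr
  exact cos_le_cos_of_nonneg_of_le_pi (by positivity) hαθ (by nlinarith)

lemma le_div_and_le_div_of_mul_sq_add_sq_le {c F x y : ℝ} (hc : 0 < c) (hF : 0 ≤ F)
    (hx : 0 ≤ x) (h : c * (x ^ 2 + y ^ 2) ≤ F * y) :
    y ≤ F / c ∧ x ≤ F / c := by
  have hy : y ≤ F / c := by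
    rw [le_div_iff₀ hc]
    nlinarith [mul_nonneg hc.le (sq_nonneg x)]
  refine ⟨hy, (pow_le_pow_iff_left₀ hx (by positivity) two_ne_zero).1 ?_⟩
  calc x ^ 2 ≤ F * y / c := by rw [le_div_iff₀ hc]; nlinarith
    _ ≤ F * (F / c) / c := by gcongr
    _ = (F / c) ^ 2 := by ring

/-- Abstract resolvent-type a priori estimate: if `u ∈ V` solves
`z^α (u,χ)_H + ⟨u,χ⟩_V = f(χ)` for all `χ ∈ V`, with `z` in the sector `Σ_θ`,
then `‖u‖_V ≤ C‖f‖_{V*}` and `|z|^{α/2}‖u‖_H ≤ C‖f‖_{V*}`, with `C` depending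
only on `θ` and `α`. -/
theorem abstract_resolvent_apriori (θ α : ℝ)
    (hθ₁ : Real.pi / 2 < θ) (hθ₂ : θ < Real.pi) (hα₀ : 0 < α) (hα₁ : α < 1) :
    ∃ C : ℝ, 0 < C ∧
      ∀ (V H : Type) (_ : NormedAddCommGroup V) (_ : InnerProductSpace ℝ V)
        (_ : CompleteSpace V)
        (_ : NormedAddCommGroup H) (_ : InnerProductSpace ℝ H)
        (_ : CompleteSpace H)
        (ι : V →L[ℝ] H) (_hι : Function.Injective ι)
        (_hdense : DenseRange ι)
        (f : V →L[ℝ] ℂ) (z : ℂ) (u : V),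
        z ≠ 0 → |z.arg| ≤ θ →
        (∀ χ : V, z ^ (α : ℂ) * ((inner ℝ (ι u) (ι χ) : ℝ) : ℂ)
            + ((inner ℝ u χ : ℝ) : ℂ) = f χ) →
        ‖u‖ ≤ C * ‖f‖ ∧ ‖z‖ ^ (α / 2) * ‖ι u‖ ≤ C * ‖f‖ := by
  have hθ : 0 < θ := by linarith [pi_pos]
  have hαθ : α * θ < π := by nlinarith
  have hcos : -1 < Real.cos (α * θ) := by
    simpa using cos_lt_cos_of_nonneg_of_le_pi (by positivity) le_rfl hαθ
  have hc : 0 < √((1 + Real.cos (α * θ)) / 2) := sqrt_pos.2 (by linarith)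
  refine ⟨(√((1 + Real.cos (α * θ)) / 2))⁻¹, inv_pos.2 hc, ?_⟩
  intro V H _ _ _ _ _ _ ι _ _ f z u _ hz hu
  have henergy : z ^ (α : ℂ) * (‖ι u‖ ^ 2 : ℝ) + (‖u‖ ^ 2 : ℝ) = f u := by
    simpa only [real_inner_self_eq_norm_sq] using hu u
  have hsector := sqrt_half_one_add_mul_le_norm_mul_add (cos_le_one _)
    (norm_cpow_real z α ▸ norm_rpow_mul_cos_le_re_cpow hα₀.le hz hαθ.le)
    (sq_nonneg ‖ι u‖) (sq_nonneg ‖u‖)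
  rw [henergy, norm_cpow_real] at hsector
  have hsplit : ‖z‖ ^ α * ‖ι u‖ ^ 2 = (‖z‖ ^ (α / 2) * ‖ι u‖) ^ 2 := by
    rw [mul_pow, ← rpow_natCast (‖z‖ ^ (α / 2)), ← rpow_mul (norm_nonneg z)]
    norm_num
  rw [hsplit] at hsector
  simpa only [← div_eq_inv_mul, and_comm] using
    le_div_and_le_div_of_mul_sq_add_sq_le hc (norm_nonneg f) (by positivity)
      (hsector.trans (f.le_opNorm u))
end
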